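/- Let (x0, y0) ∈ ℝ², δ > 0, and let p : ℝ² → ℝ be twice continuously differentiable on a neighborhood of [x0, x0+δ] × [y0, y0+δ]; let f : ℝ² → ℝ be twice continuously differentiable on a neighborhood of the set {(x, p(x,y)) : x ∈ [x0, x0+δ], y ∈ [y0, y0+δ]}. For h ∈ (0, δ] define the u-averaged (curve-approximated) mass M'(h) = (1/h) · ∫_{x0}^{x0+h} ∫_{x0}^{x0+h} ( ∫_{p(u, y0)}^{p(u, y0+h)} f(x,y) dy ) du dx and the true mass M(h) = ∫_{x0}^{x0+h} ( ∫_{p(x, y0)}^{p(x, y0+h)} f(x,y) dy ) dx. Then |M'(h) − M(h)| = O(h⁴) as h → 0⁺. In particular, this curve-based geometric approximation attains the same error order O(h⁴) as the straight-line (midpoint-averaged) approximation of the intermediate cell, so a more accurate geometric approximation does not reduce the geometric error order of the cascade remapping. -/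

import Mathlib

/-!
Write `g x u = ∫ y in p u y0..p u (y0 + h), f x y`, so that `M'(h)` averages `g` over the square
`[x0, x0 + h]²` and `M(h)` integrates its diagonal. Symmetrising in `(x, u)`,
`M' - M = (2h)⁻¹ ∬ (g x u + g u x - g x x - g u u)`, and for the curves `A = p · y0`,
`B = p · (y0 + h)` the integrand equals `(∫_{B x}^{B u} - ∫_{A x}^{A u}) (f x - f u)`.
Both intervals have length `O(h)`, across them `f x - f u` varies by `O(h²)` (a mixed second
difference of `f`), and freezing it at one point leaves the mixed second difference of `p`,
which is `O(h²)`, times `f x - f u = O(h)`. So the integrand is `O(h³)` and `M' - M = O(h⁴)`.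
All of this happens in shrinking neighbourhoods of `(x0, y0)` and `(x0, p x0 y0)`, where `p` and
`f` are `C²`, so Lipschitz bounds on them and their derivatives suffice.
-/

open Set Filter Topology Asymptotics MeasureTheory intervalIntegral
open Function (uncurry)
open scoped NNReal

section C11

variable {E F : Type*} [NormedAddCommGroup E] [NormedSpace ℝ E]
  [NormedAddCommGroup F] [NormedSpace ℝ F]

structure C11On (K : ℝ≥0) (f : E → F) (s : Set E) : Prop where
  hasFDerivAt : ∀ x ∈ s, HasFDerivAt f (fderiv ℝ f x) x
  lipschitzOnWith : LipschitzOnWith K f s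
  lipschitzOnWith_fderiv : LipschitzOnWith K (fderiv ℝ f) s

variable {K : ℝ≥0} {f : E → F} {s t : Set E}

theorem C11On.mono (hf : C11On K f s) (hts : t ⊆ s) : C11On K f t :=
  ⟨fun x hx => hf.hasFDerivAt x (hts hx), hf.lipschitzOnWith.mono hts,
    hf.lipschitzOnWith_fderiv.mono hts⟩

theorem ContDiffAt.exists_c11On_closedBall {x : E} (hf : ContDiffAt ℝ 2 f x) :
    ∃ r > 0, ∃ K, C11On K f (Metric.closedBall x r) := by
  obtain ⟨K₁, t₁, ht₁, hf₁⟩ := (hf.of_le one_le_two).exists_lipschitzOnWith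
  obtain ⟨K₂, t₂, ht₂, hf₂⟩ := (hf.fderiv_right (m := 1) le_rfl).exists_lipschitzOnWith
  have hdiff : ∀ᶠ y in 𝓝 x, DifferentiableAt ℝ f y :=
    (hf.eventually (by simp)).mono fun y hy => hy.differentiableAt two_ne_zero
  obtain ⟨r, hr, hball⟩ :=
    Metric.nhds_basis_closedBall.mem_iff.1 (inter_mem (inter_mem ht₁ ht₂) hdiff)
  exact ⟨r, hr, max K₁ K₂, fun y hy => (hball hy).2.hasFDerivAt,
    (hf₁.mono fun y hy => (hball hy).1.1).weaken (le_max_left _ _),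
    (hf₂.mono fun y hy => (hball hy).1.2).weaken (le_max_right _ _)⟩

theorem C11On.norm_sub_sub_sub_le (hf : C11On K f s) (hs : Convex ℝ s) {a b v : E}
    (ha : a ∈ s) (hav : a + v ∈ s) (hb : b ∈ s) (hbv : b + v ∈ s) :
    ‖f (b + v) - f b - (f (a + v) - f a)‖ ≤ K * ‖b - a‖ * ‖v‖ := by
  have hseg : ∀ c ∈ s, c + v ∈ s → ∀ θ ∈ Icc (0 : ℝ) 1, c + θ • v ∈ s := fun c hc hcv θ hθ => by
    simpa using hs.add_smul_sub_mem hc hcv hθ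
  have hderiv : ∀ c ∈ s, c + v ∈ s → ∀ θ ∈ Icc (0 : ℝ) 1,
      HasDerivAt (fun θ : ℝ => f (c + θ • v)) (fderiv ℝ f (c + θ • v) v) θ := fun c hc hcv θ hθ =>
    (hf.hasFDerivAt _ (hseg c hc hcv θ hθ)).comp_hasDerivAt θ
      (by simpa using ((hasDerivAt_id θ).smul_const v).const_add c)
  have := norm_image_sub_le_of_norm_deriv_le_segment_01'
    (f := fun θ : ℝ => f (b + θ • v) - f (a + θ • v)) (C := K * ‖b - a‖ * ‖v‖)
    (fun θ hθ => ((hderiv b hb hbv θ hθ).sub (hderiv a ha hav θ hθ)).hasDerivWithinAt)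
    (fun θ hθ => by
      change ‖(fderiv ℝ f (b + θ • v) - fderiv ℝ f (a + θ • v)) v‖ ≤ _
      refine (ContinuousLinearMap.le_opNorm _ _).trans
        (mul_le_mul_of_nonneg_right ?_ (norm_nonneg v))
      simpa using hf.lipschitzOnWith_fderiv.norm_sub_le (hseg b hb hbv θ (Ico_subset_Icc_self hθ))
        (hseg a ha hav θ (Ico_subset_Icc_self hθ)))
  rw [sub_sub_sub_comm]
  simpa using this

end C11

theorem C11On.abs_sub_sub_sub_le {K : ℝ≥0} {F : ℝ → ℝ → ℝ} {a b m M : ℝ}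
    (hF : C11On K (uncurry F) (Icc a b ×ˢ Icc m M)) {x u y c : ℝ} (hx : x ∈ Icc a b)
    (hu : u ∈ Icc a b) (hy : y ∈ Icc m M) (hc : c ∈ Icc m M) :
    |F x y - F u y - (F x c - F u c)| ≤ K * (b - a) * |y - c| := by
  have hshift : ∀ t : ℝ, (u, t) + (x - u, (0 : ℝ)) = (x, t) := fun t => by simp
  have := hF.norm_sub_sub_sub_le ((convex_Icc a b).prod (convex_Icc m M)) (v := (x - u, 0))
    (mk_mem_prod hu hc) (by rw [hshift]; exact mk_mem_prod hx hc) (mk_mem_prod hu hy)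
    (by rw [hshift]; exact mk_mem_prod hx hy)
  calc _ ≤ K * |y - c| * |x - u| := by simpa [hshift, Prod.norm_def] using this
    _ ≤ K * |y - c| * (b - a) := by
      gcongr
      simpa [Real.dist_eq] using Real.dist_le_of_mem_Icc hx hu
    _ = K * (b - a) * |y - c| := by ring

theorem LipschitzOnWith.abs_sub_le_of_mem_square {K : ℝ≥0} {p : ℝ → ℝ → ℝ} {x0 y0 h : ℝ}
    (hp : LipschitzOnWith K (uncurry p) (Icc x0 (x0 + h) ×ˢ Icc y0 (y0 + h)))
    {x x' y y' : ℝ} (hx : x ∈ Icc x0 (x0 + h)) (hx' : x' ∈ Icc x0 (x0 + h))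
    (hy : y ∈ Icc y0 (y0 + h)) (hy' : y' ∈ Icc y0 (y0 + h)) :
    |p x y - p x' y'| ≤ K * h := by
  have hdist : dist (x, y) (x', y') ≤ h := by
    rw [Prod.dist_eq]
    exact max_le (by simpa using Real.dist_le_of_mem_Icc hx hx')
      (by simpa using Real.dist_le_of_mem_Icc hy hy')
  simpa [Real.dist_eq] using (hp.dist_le_mul _ (mk_mem_prod hx hy) _ (mk_mem_prod hx' hy')).trans
    (mul_le_mul_of_nonneg_left hdist K.2)

theorem LipschitzOnWith.abs_sub_le_of_mem_Icc_prod {K : ℝ≥0} {F : ℝ → ℝ → ℝ} {a b : ℝ}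
    {J : Set ℝ} (hF : LipschitzOnWith K (uncurry F) (Icc a b ×ˢ J)) {x u y : ℝ}
    (hx : x ∈ Icc a b) (hu : u ∈ Icc a b) (hy : y ∈ J) :
    |F x y - F u y| ≤ K * (b - a) := by
  have hdist : dist (x, y) (u, y) ≤ b - a := by
    simpa [Prod.dist_eq] using Real.dist_le_of_mem_Icc hx hu
  simpa [Real.dist_eq] using (hF.dist_le_mul _ (mk_mem_prod hx hy) _ (mk_mem_prod hu hy)).trans
    (mul_le_mul_of_nonneg_left hdist K.2)

theorem LipschitzOnWith.mem_Icc_of_mem_square {K : ℝ≥0} {p : ℝ → ℝ → ℝ} {x0 y0 h : ℝ}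
    (hp : LipschitzOnWith K (uncurry p) (Icc x0 (x0 + h) ×ˢ Icc y0 (y0 + h)))
    (hh : 0 ≤ h) {x y : ℝ} (hx : x ∈ Icc x0 (x0 + h)) (hy : y ∈ Icc y0 (y0 + h)) :
    p x y ∈ Icc (p x0 y0 - K * h) (p x0 y0 + K * h) :=
  mem_Icc_iff_abs_le.1 <| hp.abs_sub_le_of_mem_square (left_mem_Icc.2 (by linarith)) hx
    (left_mem_Icc.2 (by linarith)) hy

section OneDim

variable {E : Type*} [NormedAddCommGroup E] [NormedSpace ℝ E]

theorem integral_add_integral_sub_integral_sub_integral {J : Set ℝ} [J.OrdConnected]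
    {G₁ G₂ : ℝ → E} (h₁ : ContinuousOn G₁ J) (h₂ : ContinuousOn G₂ J) {A₁ A₂ B₁ B₂ : ℝ}
    (hA₁ : A₁ ∈ J) (hA₂ : A₂ ∈ J) (hB₁ : B₁ ∈ J) (hB₂ : B₂ ∈ J) :
    (∫ y in A₂..B₂, G₁ y) + (∫ y in A₁..B₁, G₂ y) - (∫ y in A₁..B₁, G₁ y) - ∫ y in A₂..B₂, G₂ y
      = (∫ y in B₁..B₂, G₁ y - G₂ y) - ∫ y in A₁..A₂, G₁ y - G₂ y := by
  have hint : ∀ {G : ℝ → E}, ContinuousOn G J → ∀ a ∈ J, ∀ b ∈ J, IntervalIntegrable G volume a b :=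
    fun hG a ha b hb => (hG.mono (Set.OrdConnected.uIcc_subset ‹_› ha hb)).intervalIntegrable
  have h₁₂ : ContinuousOn (fun y => G₁ y - G₂ y) J := h₁.sub h₂
  rw [← integral_interval_sub_interval_comm' (hint h₁₂ _ hA₂ _ hB₂) (hint h₁₂ _ hA₁ _ hB₁)
    (hint h₁₂ _ hA₂ _ hA₁), integral_sub (hint h₁ _ hA₂ _ hB₂) (hint h₂ _ hA₂ _ hB₂),
    integral_sub (hint h₁ _ hA₁ _ hB₁) (hint h₂ _ hA₁ _ hB₁)]
  abel

variable [CompleteSpace E]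

theorem norm_integral_sub_smul_le {G : ℝ → E} {a b c C : ℝ}
    (hG : IntervalIntegrable G volume a b) (hC : ∀ y ∈ uIcc a b, ‖G y - G c‖ ≤ C) :
    ‖(∫ y in a..b, G y) - (b - a) • G c‖ ≤ C * |b - a| := by
  rw [← intervalIntegral.integral_const, ← integral_sub hG intervalIntegrable_const]
  exact norm_integral_le_of_norm_le_const fun y hy => hC y (uIoc_subset_uIcc hy)

theorem norm_integral_sub_integral_le {G : ℝ → E} {A₁ A₂ B₁ B₂ c C : ℝ}
    (hA : IntervalIntegrable G volume A₁ A₂) (hB : IntervalIntegrable G volume B₁ B₂)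
    (hCA : ∀ y ∈ uIcc A₁ A₂, ‖G y - G c‖ ≤ C) (hCB : ∀ y ∈ uIcc B₁ B₂, ‖G y - G c‖ ≤ C) :
    ‖(∫ y in B₁..B₂, G y) - ∫ y in A₁..A₂, G y‖
      ≤ C * (|B₂ - B₁| + |A₂ - A₁|) + |B₂ - B₁ - (A₂ - A₁)| * ‖G c‖ := by
  have hsplit : (∫ y in B₁..B₂, G y) - ∫ y in A₁..A₂, G y
      = ((∫ y in B₁..B₂, G y) - (B₂ - B₁) • G c) - ((∫ y in A₁..A₂, G y) - (A₂ - A₁) • G c)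
        + (B₂ - B₁ - (A₂ - A₁)) • G c := by module
  rw [hsplit]
  refine (norm_add_le _ _).trans ?_
  rw [norm_smul, Real.norm_eq_abs]
  linarith [norm_sub_le ((∫ y in B₁..B₂, G y) - (B₂ - B₁) • G c)
    ((∫ y in A₁..A₂, G y) - (A₂ - A₁) • G c), norm_integral_sub_smul_le hA hCA,
    norm_integral_sub_smul_le hB hCB]

theorem norm_integral_cross_le {J : Set ℝ} [J.OrdConnected] {G₁ G₂ : ℝ → E}
    (h₁ : ContinuousOn G₁ J) (h₂ : ContinuousOn G₂ J) {A₁ A₂ B₁ B₂ c C : ℝ}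
    (hA₁ : A₁ ∈ J) (hA₂ : A₂ ∈ J) (hB₁ : B₁ ∈ J) (hB₂ : B₂ ∈ J)
    (hC : ∀ y ∈ J, ‖G₁ y - G₂ y - (G₁ c - G₂ c)‖ ≤ C) :
    ‖(∫ y in A₂..B₂, G₁ y) + (∫ y in A₁..B₁, G₂ y) - (∫ y in A₁..B₁, G₁ y)
        - ∫ y in A₂..B₂, G₂ y‖
      ≤ C * (|B₂ - B₁| + |A₂ - A₁|) + |B₂ - B₁ - (A₂ - A₁)| * ‖G₁ c - G₂ c‖ := by
  have hint : ∀ a ∈ J, ∀ b ∈ J, IntervalIntegrable (fun y => G₁ y - G₂ y) volume a b :=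
    fun a ha b hb =>
      ((h₁.sub h₂).mono (Set.OrdConnected.uIcc_subset ‹_› ha hb)).intervalIntegrable
  rw [integral_add_integral_sub_integral_sub_integral h₁ h₂ hA₁ hA₂ hB₁ hB₂]
  exact norm_integral_sub_integral_le (hint _ hA₁ _ hA₂) (hint _ hB₁ _ hB₂)
    (fun y hy => hC y (Set.OrdConnected.uIcc_subset ‹_› hA₁ hA₂ hy))
    (fun y hy => hC y (Set.OrdConnected.uIcc_subset ‹_› hB₁ hB₂ hy))

end OneDim

theorem two_mul_integral_integral_sub_integral_diag {g : ℝ → ℝ → ℝ} {a b : ℝ} (hab : a ≤ b)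
    (hg : ContinuousOn (uncurry g) (Icc a b ×ˢ Icc a b)) :
    2 * ((∫ x in a..b, ∫ u in a..b, g x u) - (b - a) * ∫ x in a..b, g x x)
      = ∫ z in Ioc a b ×ˢ Ioc a b, g z.1 z.2 + g z.2 z.1 - g z.1 z.1 - g z.2 z.2 := by
  set μ := volume.restrict (Ioc a b)
  have hμμ : volume.restrict (Ioc a b ×ˢ Ioc a b) = μ.prod μ := by
    rw [Measure.prod_restrict, ← Measure.volume_eq_prod]
  have hint : ∀ φ : ℝ × ℝ → ℝ, ContinuousOn φ (Icc a b ×ˢ Icc a b) → Integrable φ (μ.prod μ) :=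
    fun φ hφ => by
      rw [← hμμ]
      exact (hφ.integrableOn_compact (isCompact_Icc.prod isCompact_Icc)).mono_set
        (prod_mono Ioc_subset_Icc_self Ioc_subset_Icc_self)
  have i₁ : Integrable (fun z : ℝ × ℝ => g z.1 z.2) (μ.prod μ) := hint _ hg
  have i₂ : Integrable (fun z : ℝ × ℝ => g z.2 z.1) (μ.prod μ) :=
    hint _ (hg.comp continuous_swap.continuousOn fun _ hz => ⟨hz.2, hz.1⟩)
  have i₃ : Integrable (fun z : ℝ × ℝ => g z.1 z.1) (μ.prod μ) :=
    hint _ (hg.comp (continuous_fst.prodMk continuous_fst).continuousOn fun _ hz => ⟨hz.1, hz.1⟩)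
  have i₄ : Integrable (fun z : ℝ × ℝ => g z.2 z.2) (μ.prod μ) :=
    hint _ (hg.comp (continuous_snd.prodMk continuous_snd).continuousOn fun _ hz => ⟨hz.2, hz.2⟩)
  have i₁₂ : Integrable (fun z : ℝ × ℝ => g z.1 z.2 + g z.2 z.1) (μ.prod μ) := i₁.add i₂
  have i₁₂₃ : Integrable (fun z : ℝ × ℝ => g z.1 z.2 + g z.2 z.1 - g z.1 z.1) (μ.prod μ) :=
    i₁₂.sub i₃
  have hI : ∫ z, g z.1 z.2 ∂μ.prod μ = ∫ x in a..b, ∫ u in a..b, g x u := by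
    rw [integral_prod _ i₁]
    simp only [μ, intervalIntegral.integral_of_le hab]
  have hI' : ∫ z, g z.2 z.1 ∂μ.prod μ = ∫ x in a..b, ∫ u in a..b, g x u :=
    (integral_prod_swap (uncurry g)).trans hI
  have hμ : μ.real univ = b - a := by simp [μ, hab]
  have hD₁ : ∫ z, g z.1 z.1 ∂μ.prod μ = (b - a) * ∫ x in a..b, g x x := by
    rw [integral_fun_fst (fun x => g x x), hμ, smul_eq_mul, intervalIntegral.integral_of_le hab]
  have hD₂ : ∫ z, g z.2 z.2 ∂μ.prod μ = (b - a) * ∫ x in a..b, g x x := by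
    rw [integral_fun_snd (fun x => g x x), hμ, smul_eq_mul, intervalIntegral.integral_of_le hab]
  rw [hμμ, integral_sub i₁₂₃ i₄, integral_sub i₁₂ i₃, integral_add i₁ i₂, hI, hI', hD₁, hD₂]
  ring

theorem abs_inv_mul_integral_integral_sub_integral_diag_le {g : ℝ → ℝ → ℝ} {a b B : ℝ}
    (hab : a ≤ b) (hg : ContinuousOn (uncurry g) (Icc a b ×ˢ Icc a b))
    (hB : ∀ x ∈ Icc a b, ∀ u ∈ Icc a b, |g x u + g u x - g x x - g u u| ≤ B) :
    |(1 / (b - a)) * (∫ x in a..b, ∫ u in a..b, g x u) - ∫ x in a..b, g x x|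
      ≤ B / 2 * (b - a) := by
  rcases hab.eq_or_lt with rfl | hlt
  · simp
  have hbound := norm_setIntegral_le_of_norm_le_const (μ := volume) (s := Ioc a b ×ˢ Ioc a b)
    (f := fun z : ℝ × ℝ => g z.1 z.2 + g z.2 z.1 - g z.1 z.1 - g z.2 z.2)
    (by simp [Measure.volume_eq_prod, ENNReal.mul_lt_top])
    fun z hz => hB _ (Ioc_subset_Icc_self hz.1) _ (Ioc_subset_Icc_self hz.2)
  rw [← two_mul_integral_integral_sub_integral_diag hab hg, Real.norm_eq_abs, abs_mul, abs_two,
    Measure.volume_eq_prod, measureReal_prod_prod, Real.volume_real_Ioc_of_le hab] at hbound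
  have hba : 0 < b - a := sub_pos.2 hlt
  set I := ∫ x in a..b, ∫ u in a..b, g x u
  set D := ∫ x in a..b, g x x
  rw [show 1 / (b - a) * I - D = (I - (b - a) * D) / (b - a) by field_simp, abs_div,
    abs_of_pos hba, div_le_iff₀ hba]
  nlinarith

/-- The mass of `f x` across the strip between the curves `p · a` and `p · b`, taken at abscissa
`u`: `M(h)` integrates it on the diagonal `u = x`, `M'(h)` averages it over `u`. -/
noncomputable def sliceMass (p f : ℝ → ℝ → ℝ) (a b x u : ℝ) : ℝ :=
  ∫ y in p u a..p u b, f x y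

theorem continuousOn_sliceMass {p f : ℝ → ℝ → ℝ} {a b : ℝ} {I J : Set ℝ} [J.OrdConnected]
    {K : ℝ≥0} (hf : LipschitzOnWith K (uncurry f) (I ×ˢ J))
    (hpa : ContinuousOn (p · a) I) (hpb : ContinuousOn (p · b) I)
    (hpaJ : MapsTo (p · a) I J) (hpbJ : MapsTo (p · b) I J) :
    ContinuousOn (uncurry (sliceMass p f a b)) (I ×ˢ I) := by
  obtain ⟨F, hF, hfF⟩ := hf.extend_real
  have hprim : Continuous fun q : ℝ × ℝ => ∫ y in (0 : ℝ)..q.2, F (q.1, y) :=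
    continuous_parametric_primitive_of_continuous (f := fun x y => F (x, y)) hF.continuous
  have hint : ∀ x c d, IntervalIntegrable (fun y => F (x, y)) volume c d := fun x _ _ =>
    (hF.continuous.comp (Continuous.prodMk_right x)).intervalIntegrable _ _
  have hcomp : ∀ t, ContinuousOn (p · t) I →
      ContinuousOn (fun z : ℝ × ℝ => ∫ y in (0 : ℝ)..p z.2 t, F (z.1, y)) (I ×ˢ I) := fun t ht =>
    hprim.comp_continuousOn (continuousOn_fst.prodMk (ht.comp continuousOn_snd fun _ hz => hz.2))
  refine ((hcomp b hpb).sub (hcomp a hpa)).congr ?_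
  rintro ⟨x, u⟩ ⟨hx, hu⟩
  simp only [Pi.sub_apply]
  rw [integral_interval_sub_left (hint _ _ _) (hint _ _ _)]
  exact integral_congr fun y hy =>
    hfF (mk_mem_prod hx (Set.OrdConnected.uIcc_subset ‹_› (hpaJ hu) (hpbJ hu) hy))

theorem abs_sliceMass_cross_le {p f : ℝ → ℝ → ℝ} {Kp Kf : ℝ≥0} {x0 y0 h x u : ℝ} (hh : 0 ≤ h)
    (hp : C11On Kp (uncurry p) (Icc x0 (x0 + h) ×ˢ Icc y0 (y0 + h)))
    (hf : C11On Kf (uncurry f)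
      (Icc x0 (x0 + h) ×ˢ Icc (p x0 y0 - Kp * h) (p x0 y0 + Kp * h)))
    (hx : x ∈ Icc x0 (x0 + h)) (hu : u ∈ Icc x0 (x0 + h)) :
    |sliceMass p f y0 (y0 + h) x u + sliceMass p f y0 (y0 + h) u x
        - sliceMass p f y0 (y0 + h) x x - sliceMass p f y0 (y0 + h) u u|
      ≤ Kf * Kp * (2 * Kp + 1) * h ^ 3 := by
  set J := Icc (p x0 y0 - Kp * h) (p x0 y0 + Kp * h)
  have hy₀ : y0 ∈ Icc y0 (y0 + h) := left_mem_Icc.2 (by linarith)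
  have hy₁ : y0 + h ∈ Icc y0 (y0 + h) := right_mem_Icc.2 (by linarith)
  have hpJ : ∀ s ∈ Icc x0 (x0 + h), ∀ t ∈ Icc y0 (y0 + h), p s t ∈ J := fun s hs t ht =>
    hp.lipschitzOnWith.mem_Icc_of_mem_square hh hs ht
  have hpsq : ∀ s ∈ Icc x0 (x0 + h), ∀ s' ∈ Icc x0 (x0 + h), ∀ t ∈ Icc y0 (y0 + h),
      ∀ t' ∈ Icc y0 (y0 + h), |p s t - p s' t'| ≤ Kp * h := fun s hs s' hs' t ht t' ht' =>
    hp.lipschitzOnWith.abs_sub_le_of_mem_square hs hs' ht ht'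
  have hfJ : ∀ s ∈ Icc x0 (x0 + h), ContinuousOn (f s) J := fun s hs =>
    hf.lipschitzOnWith.continuousOn.comp (Continuous.prodMk_right s).continuousOn
      fun _ hy => mk_mem_prod hs hy
  set c := p x y0
  have hpJ' : ∀ s ∈ Icc x0 (x0 + h), ∀ t ∈ Icc y0 (y0 + h),
      p s t ∈ J ∩ Icc (c - Kp * h) (c + Kp * h) := fun s hs t ht =>
    ⟨hpJ s hs t ht, mem_Icc_iff_abs_le.1 (hpsq x hx s hs y0 hy₀ t ht)⟩
  have hG : ∀ y ∈ J ∩ Icc (c - Kp * h) (c + Kp * h),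
      ‖f x y - f u y - (f x c - f u c)‖ ≤ Kf * h * (Kp * h) := by
    rintro y ⟨hyJ, hyc⟩
    rw [Real.norm_eq_abs]
    refine (hf.abs_sub_sub_sub_le hx hu hyJ (hpJ x hx y0 hy₀)).trans ?_
    rw [add_sub_cancel_left, abs_sub_comm]
    gcongr
    exact mem_Icc_iff_abs_le.2 hyc
  have hGc : |f x c - f u c| ≤ Kf * h := by
    simpa using hf.lipschitzOnWith.abs_sub_le_of_mem_Icc_prod hx hu (hpJ x hx y0 hy₀)
  have hrect : |p u (y0 + h) - p x (y0 + h) - (p u y0 - p x y0)| ≤ Kp * h * h := by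
    simpa [abs_of_nonneg hh] using hp.abs_sub_sub_sub_le hu hx hy₁ hy₀
  have key := norm_integral_cross_le ((hfJ x hx).mono inter_subset_left)
    ((hfJ u hu).mono inter_subset_left) (hpJ' x hx y0 hy₀) (hpJ' u hu y0 hy₀)
    (hpJ' x hx _ hy₁) (hpJ' u hu _ hy₁) hG
  simp only [Real.norm_eq_abs] at key
  calc _ ≤ _ := key
    _ ≤ Kf * h * (Kp * h) * (Kp * h + Kp * h) + Kp * h * h * (Kf * h) := by
      gcongr
      · exact hpsq _ hu _ hx _ hy₁ _ hy₁
      · exact hpsq _ hu _ hx _ hy₀ _ hy₀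
    _ = Kf * Kp * (2 * Kp + 1) * h ^ 3 := by ring

theorem abs_avg_sliceMass_sub_sliceMass_diag_le {p f : ℝ → ℝ → ℝ} {Kp Kf : ℝ≥0} {x0 y0 h : ℝ}
    (hh : 0 ≤ h) (hp : C11On Kp (uncurry p) (Icc x0 (x0 + h) ×ˢ Icc y0 (y0 + h)))
    (hf : C11On Kf (uncurry f)
      (Icc x0 (x0 + h) ×ˢ Icc (p x0 y0 - Kp * h) (p x0 y0 + Kp * h))) :
    |(1 / h) * (∫ x in x0..x0 + h, ∫ u in x0..x0 + h, sliceMass p f y0 (y0 + h) x u)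
        - ∫ x in x0..x0 + h, sliceMass p f y0 (y0 + h) x x|
      ≤ Kf * Kp * (2 * Kp + 1) / 2 * h ^ 4 := by
  have hcurve : ∀ t ∈ Icc y0 (y0 + h), ContinuousOn (p · t) (Icc x0 (x0 + h)) ∧
      MapsTo (p · t) (Icc x0 (x0 + h)) (Icc (p x0 y0 - Kp * h) (p x0 y0 + Kp * h)) := fun t ht =>
    ⟨hp.lipschitzOnWith.continuousOn.comp (continuous_id.prodMk continuous_const).continuousOn
      fun _ hs => mk_mem_prod hs ht, fun _ hs => hp.lipschitzOnWith.mem_Icc_of_mem_square hh hs ht⟩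
  obtain ⟨hc₀, hm₀⟩ := hcurve y0 (left_mem_Icc.2 (by linarith))
  obtain ⟨hc₁, hm₁⟩ := hcurve (y0 + h) (right_mem_Icc.2 (by linarith))
  have := abs_inv_mul_integral_integral_sub_integral_diag_le (g := sliceMass p f y0 (y0 + h))
    (by linarith : x0 ≤ x0 + h)
    (continuousOn_sliceMass hf.lipschitzOnWith hc₀ hc₁ hm₀ hm₁)
    (fun x hx u hu => abs_sliceMass_cross_le hh hp hf hx hu)
  rw [add_sub_cancel_left] at this
  exact this.trans_eq (by ring)

theorem Icc_prod_Icc_subset_closedBall {a b c d x y r : ℝ} (ha : x - r ≤ a) (hb : b ≤ x + r)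
    (hc : y - r ≤ c) (hd : d ≤ y + r) : Icc a b ×ˢ Icc c d ⊆ Metric.closedBall (x, y) r := by
  rw [← closedBall_prod_same, Real.closedBall_eq_Icc, Real.closedBall_eq_Icc]
  exact prod_mono (Icc_subset_Icc ha hb) (Icc_subset_Icc hc hd)

/-- Error of the curve-based geometric approximation (the CCSL' variant):
under the same smoothness assumptions as for the intermediate cell, the
u-averaged (curve-approximated) mass
`M'(h) = (1/h) ∫_{x₀}^{x₀+h} ∫_{x₀}^{x₀+h} ∫_{p(u,y₀)}^{p(u,y₀+h)} f(x,y) dy du dx`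
differs from the true mass
`M(h) = ∫_{x₀}^{x₀+h} ∫_{p(x,y₀)}^{p(x,y₀+h)} f(x,y) dy dx`
by `O(h⁴)` as `h → 0⁺`; i.e. the curve-based approximation attains the same
error order as the straight-line approximation. -/
theorem stmt_6
    (x0 y0 δ : ℝ) (hδ : 0 < δ)
    (p : ℝ → ℝ → ℝ) (V : Set (ℝ × ℝ)) (hV : IsOpen V)
    (hVrect : Set.Icc x0 (x0 + δ) ×ˢ Set.Icc y0 (y0 + δ) ⊆ V)
    (hp : ContDiffOn ℝ 2 (fun z : ℝ × ℝ => p z.1 z.2) V)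
    (f : ℝ → ℝ → ℝ) (W : Set (ℝ × ℝ)) (hW : IsOpen W)
    (hWcurve : ∀ x ∈ Set.Icc x0 (x0 + δ), ∀ y ∈ Set.Icc y0 (y0 + δ),
        (x, p x y) ∈ W)
    (hf : ContDiffOn ℝ 2 (fun z : ℝ × ℝ => f z.1 z.2) W) :
    (fun h : ℝ =>
        |(1 / h) *
            (∫ x in x0..(x0 + h),
              ∫ u in x0..(x0 + h), ∫ y in (p u y0)..(p u (y0 + h)), f x y)
          - ∫ x in x0..(x0 + h), ∫ y in (p x y0)..(p x (y0 + h)), f x y|)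
      =O[𝓝[>] (0 : ℝ)] (fun h : ℝ => h ^ 4) := by
  have hx0 : x0 ∈ Icc x0 (x0 + δ) := left_mem_Icc.2 (by linarith)
  have hy0 : y0 ∈ Icc y0 (y0 + δ) := left_mem_Icc.2 (by linarith)
  obtain ⟨r, hr, Kp, hpC⟩ :=
    (hp.contDiffAt (hV.mem_nhds (hVrect (mk_mem_prod hx0 hy0)))).exists_c11On_closedBall
  obtain ⟨ε, hε, Kf, hfC⟩ :=
    (hf.contDiffAt (hW.mem_nhds (hWcurve x0 hx0 y0 hy0))).exists_c11On_closedBall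
  have hη : 0 < min r ε / (Kp + 1) := by positivity
  refine IsBigO.of_bound (Kf * Kp * (2 * Kp + 1) / 2) ?_
  filter_upwards [Ioc_mem_nhdsGT hη] with h ⟨hh, hhη⟩
  rw [le_div_iff₀ (by positivity)] at hhη
  have hhr : h ≤ r := by nlinarith [min_le_left r ε, Kp.2]
  have hhε : Kp * h ≤ ε ∧ h ≤ ε := by constructor <;> nlinarith [min_le_right r ε, Kp.2]
  rw [Real.norm_eq_abs, abs_abs, norm_pow, Real.norm_eq_abs, abs_of_pos hh]
  refine abs_avg_sliceMass_sub_sliceMass_diag_le hh.le (hpC.mono ?_) (hfC.mono ?_) <;>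
    exact Icc_prod_Icc_subset_closedBall (by linarith) (by linarith) (by linarith) (by linarith)
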